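/- arXiv:1402.3277 — 2 statements merged into one kernel-verified Lean document; each statement's English description precedes it below -/
import Mathlib

section
/- Let C be a class of languages over a finite alphabet A that is nonempty and closed under Boolean operations, closed under left and right quotients by words, and contains only regular languages. Let α: A⁺ → S be a semigroup morphism into a finite semigroup S and let L₁ = α⁻¹(T₁), L₂ = α⁻¹(T₂) be languages recognized by α with accepting sets T₁, T₂ ⊆ S. Then the following are equivalent: (1) L₁ and L₂ are C-separable (some language of C contains L₁ and is disjoint from L₂); (2) for all t₁ ∈ T₁ and t₂ ∈ T₂, {t₁, t₂} ∉ I_C[α]; (3) for every C-partition 𝐊 that is optimal for α, L₁ and L₂ can be separated by a union of blocks of 𝐊. -/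
open Pointwise

namespace FOSep

/-- First-order formulas over alphabet `A`, with variables indexed by `ℕ`:
atomic formulas are `a(x)` for letters `a` and `x < y`; connectives are
negation, conjunction and existential quantification. -/
inductive Form (A : Type) : Type
  | letter : A → ℕ → Form A
  | lt : ℕ → ℕ → Form A
  | not : Form A → Form A
  | and : Form A → Form A → Form A
  | ex : ℕ → Form A → Form A

namespace Form

/-- Quantifier rank: maximal nesting depth of quantifiers. -/
def rank {A : Type} : Form A → ℕ
  | letter _ _ => 0
  | lt _ _ => 0
  | not φ => rank φ
  | and φ ψ => max (rank φ) (rank ψ)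
  | ex _ φ => rank φ + 1

/-- Free variables of a formula. -/
def freeVars {A : Type} : Form A → Finset ℕ
  | letter _ i => {i}
  | lt i j => {i, j}
  | not φ => freeVars φ
  | and φ ψ => freeVars φ ∪ freeVars ψ
  | ex n φ => freeVars φ \ {n}

end Form

/-- A sentence is a formula without free variables. -/
def IsSentence {A : Type} (φ : Form A) : Prop := φ.freeVars = ∅

/-- Satisfaction of a formula in a finite word (a list of letters, whose
positions are ordered by `<`), under an assignment of variables to positions. -/
def Interp {A : Type} (w : List A) : Form A → (ℕ → Fin w.length) → Prop
  | .letter a i, v => w.get (v i) = a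
  | .lt i j, v => (v i : ℕ) < (v j : ℕ)
  | .not φ, v => ¬ Interp w φ v
  | .and φ ψ, v => Interp w φ v ∧ Interp w ψ v
  | .ex n φ, v => ∃ p : Fin w.length, Interp w φ (Function.update v n p)

/-- The underlying (nonempty) list of letters of a nonempty word. -/
def wordList {A : Type} (w : FreeSemigroup A) : List A := w.head :: w.tail

/-- A nonempty word satisfies a formula if every assignment satisfies it;
for sentences this is the usual notion of satisfaction. -/
def Models {A : Type} (w : FreeSemigroup A) (φ : Form A) : Prop :=
  ∀ v : ℕ → Fin (wordList w).length, Interp (wordList w) φ v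

/-- The language of words of `A⁺` satisfying `φ`. -/
def LangOf {A : Type} (φ : Form A) : Set (FreeSemigroup A) := { w | Models w φ }

/-- A language `L ⊆ A⁺` is FO-definable if it is the language of some sentence. -/
def FODefinable {A : Type} (L : Set (FreeSemigroup A)) : Prop :=
  ∃ φ : Form A, IsSentence φ ∧ L = LangOf φ

/-- `w ≡_k w'`: the two words satisfy the same sentences of quantifier
rank at most `k`. -/
def EquivK {A : Type} (k : ℕ) (w w' : FreeSemigroup A) : Prop :=
  ∀ φ : Form A, IsSentence φ → φ.rank ≤ k → (Models w φ ↔ Models w' φ)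

/-- A finite partition of `X`: finitely many blocks, and every element lies
in exactly one block. -/
def FinPart {X : Type} (P : Set (Set X)) : Prop :=
  P.Finite ∧ ∀ x : X, ∃! B, B ∈ P ∧ x ∈ B

/-- An FO-partition: a finite partition all of whose blocks are FO-definable. -/
def FOPart {A : Type} (P : Set (Set (FreeSemigroup A))) : Prop :=
  FinPart P ∧ ∀ B ∈ P, FODefinable B

/-- `K` separates `L₀` from `L₁`. -/
def Separates {X : Type} (K L₀ L₁ : Set X) : Prop :=
  L₀ ⊆ K ∧ K ∩ L₁ = ∅

/-- `L₀` and `L₁` are separable by an FO-definable language. -/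
def FOSeparable {A : Type} (L₀ L₁ : Set (FreeSemigroup A)) : Prop :=
  ∃ K : Set (FreeSemigroup A), FODefinable K ∧ Separates K L₀ L₁

/-- The imprint of a finite partition `P` on a morphism `α`:
the sets `T ⊆ S` contained in the image of some block. -/
def imprint {A S : Type} [Semigroup S] (α : FreeSemigroup A →ₙ* S)
    (P : Set (Set (FreeSemigroup A))) : Set (Set S) :=
  { T | ∃ K ∈ P, T ⊆ ⇑α '' K }

/-- The optimal FO-imprint of `α`: the intersection of the imprints of all
FO-partitions. -/
def optImprintFO {A S : Type} [Semigroup S] (α : FreeSemigroup A →ₙ* S) :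
    Set (Set S) :=
  { T | ∀ P : Set (Set (FreeSemigroup A)), FOPart P → T ∈ imprint α P }

/-- Powers in a semigroup: `spow x n = x^(n+1)`. -/
def spow {M : Type} [Semigroup M] (x : M) : ℕ → M
  | 0 => x
  | n + 1 => spow x n * x

/-- `X ⊆ 2^S` contains `𝕊` and is closed under downset, products, and the
FO-operation `T ↦ T^ω ∪ T^(ω+1)` (phrased via idempotent powers: in a finite
semigroup, `T^ω` is the unique idempotent power of `T`). -/
def SatClosed {S : Type} [Semigroup S] (𝕊 X : Set (Set S)) : Prop :=
  𝕊 ⊆ X ∧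
  (∀ T ∈ X, ∀ T' : Set S, T' ⊆ T → T' ∈ X) ∧
  (∀ T ∈ X, ∀ T' ∈ X, T * T' ∈ X) ∧
  (∀ T ∈ X, ∀ n : ℕ, spow T n * spow T n = spow T n →
      spow T n ∪ spow T n * T ∈ X)

/-- `Sat 𝕊`: the smallest subset of `2^S` containing `𝕊` that is closed under
downset, products and the FO-operation. -/
def Sat {S : Type} [Semigroup S] (𝕊 : Set (Set S)) : Set (Set S) :=
  ⋂₀ { X | SatClosed 𝕊 X }

/-- `Sat α = Sat({{α(w)} | w ∈ A⁺})`. -/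
def SatM {A S : Type} [Semigroup S] (α : FreeSemigroup A →ₙ* S) : Set (Set S) :=
  Sat { T | ∃ w : FreeSemigroup A, T = {α w} }

/-- Left quotient `w⁻¹L`. -/
def QuotL {A : Type} (w : FreeSemigroup A) (L : Set (FreeSemigroup A)) :
    Set (FreeSemigroup A) := { u | w * u ∈ L }

/-- Right quotient `Lw⁻¹`. -/
def QuotR {A : Type} (w : FreeSemigroup A) (L : Set (FreeSemigroup A)) :
    Set (FreeSemigroup A) := { u | u * w ∈ L }

/-- A language is regular if it is recognized by a morphism into a finite
semigroup. -/
def Regular {A : Type} (L : Set (FreeSemigroup A)) : Prop :=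
  ∃ (S : Type) (_ : Semigroup S) (_ : Fintype S)
    (β : FreeSemigroup A →ₙ* S) (F : Set S), L = ⇑β ⁻¹' F

/-- A class of languages that is nonempty, closed under Boolean operations and
under left/right quotients by words, and contains only regular languages. -/
def GoodClass {A : Type} (C : Set (Set (FreeSemigroup A))) : Prop :=
  C.Nonempty ∧
  (∀ L ∈ C, ∀ L' ∈ C, L ∪ L' ∈ C) ∧
  (∀ L ∈ C, ∀ L' ∈ C, L ∩ L' ∈ C) ∧
  (∀ L ∈ C, Lᶜ ∈ C) ∧
  (∀ L ∈ C, ∀ w : FreeSemigroup A, QuotL w L ∈ C ∧ QuotR w L ∈ C) ∧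
  (∀ L ∈ C, Regular L)

/-- A C-partition: a finite partition all of whose blocks belong to `C`. -/
def CPart {A : Type} (C : Set (Set (FreeSemigroup A)))
    (P : Set (Set (FreeSemigroup A))) : Prop :=
  FinPart P ∧ ∀ B ∈ P, B ∈ C

/-- The optimal imprint with respect to a class `C`: the intersection of the
imprints of all C-partitions. -/
def optImprint {A S : Type} [Semigroup S] (C : Set (Set (FreeSemigroup A)))
    (α : FreeSemigroup A →ₙ* S) : Set (Set S) :=
  { T | ∀ P : Set (Set (FreeSemigroup A)), CPart C P → T ∈ imprint α P }

/-- A subset of a semigroup that is a subsemigroup and a group under the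
induced product. -/
def IsGroupSet {M : Type} [Semigroup M] (G : Set M) : Prop :=
  (∀ x ∈ G, ∀ y ∈ G, x * y ∈ G) ∧
  ∃ e ∈ G, (∀ x ∈ G, e * x = x ∧ x * e = x) ∧
    ∀ x ∈ G, ∃ y ∈ G, x * y = e ∧ y * x = e

/-- Aperiodicity: `s^ω = s^(ω+1)` for every `s` (phrased via idempotent powers). -/
def Aperiodic (S : Type) [Semigroup S] : Prop :=
  ∀ s : S, ∀ n : ℕ, spow s n * spow s n = spow s n → spow s n = spow s n * s

/-- Green's `H`-equivalence relative to a subsemigroup `X` of `M`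
(with witnesses taken in `X`). -/
def HEquivIn {M : Type} [Semigroup M] (X : Set M) (s s' : M) : Prop :=
  s = s' ∨ ((∃ t ∈ X, s * t = s') ∧ (∃ t ∈ X, s' * t = s) ∧
            (∃ t ∈ X, t * s = s') ∧ (∃ t ∈ X, t * s' = s))

/-- `H` is an `H`-class of the semigroup `X`. -/
def IsHClassIn {M : Type} [Semigroup M] (X : Set M) (H : Set M) : Prop :=
  ∃ s ∈ X, H = { s' ∈ X | HEquivIn X s s' }

/-- Closure conditions for `Sat_G`. -/
def SatGClosed {S : Type} [Semigroup S] (𝕊 X : Set (Set S)) : Prop :=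
  𝕊 ⊆ X ∧
  (∀ T ∈ X, ∀ T' : Set S, T' ⊆ T → T' ∈ X) ∧
  (∀ T ∈ X, ∀ T' ∈ X, T * T' ∈ X) ∧
  (∀ 𝔾 : Set (Set S), 𝔾 ⊆ X → IsGroupSet 𝔾 → ⋃₀ 𝔾 ∈ X)

/-- `Sat_G 𝕊`: the smallest subset of `2^S` containing `𝕊` closed under downset,
products, and unions of groups. -/
def SatG {S : Type} [Semigroup S] (𝕊 : Set (Set S)) : Set (Set S) :=
  ⋂₀ { X | SatGClosed 𝕊 X }

/-- Closure conditions for `Sat_H`. -/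
def SatHClosed {S : Type} [Semigroup S] (𝕊 X : Set (Set S)) : Prop :=
  𝕊 ⊆ X ∧
  (∀ T ∈ X, ∀ T' : Set S, T' ⊆ T → T' ∈ X) ∧
  (∀ T ∈ X, ∀ T' ∈ X, T * T' ∈ X) ∧
  (∀ H : Set (Set S), IsHClassIn X H → ⋃₀ H ∈ X)

/-- `Sat_H 𝕊`: the smallest subset of `2^S` containing `𝕊` closed under downset,
products, and unions of `H`-classes. -/
def SatH {S : Type} [Semigroup S] (𝕊 : Set (Set S)) : Set (Set S) :=
  ⋂₀ { X | SatHClosed 𝕊 X }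

/-! ### Infinite words -/

/-- Satisfaction of a formula in an ω-word (a function `ℕ → A`), under an
assignment of variables to positions. -/
def InterpInf {A : Type} (w : ℕ → A) : Form A → (ℕ → ℕ) → Prop
  | .letter a i, v => w (v i) = a
  | .lt i j, v => v i < v j
  | .not φ, v => ¬ InterpInf w φ v
  | .and φ ψ, v => InterpInf w φ v ∧ InterpInf w ψ v
  | .ex n φ, v => ∃ p : ℕ, InterpInf w φ (Function.update v n p)

/-- An ω-word satisfies a formula if every assignment satisfies it; for
sentences this is the usual notion of satisfaction. -/
def ModelsInf {A : Type} (w : ℕ → A) (φ : Form A) : Prop :=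
  ∀ v : ℕ → ℕ, InterpInf w φ v

/-- The ω-language of ω-words satisfying `φ`. -/
def LangOfInf {A : Type} (φ : Form A) : Set (ℕ → A) := { w | ModelsInf w φ }

/-- An ω-language is FO-definable if it is the ω-language of some sentence. -/
def FODefinableInf {A : Type} (L : Set (ℕ → A)) : Prop :=
  ∃ φ : Form A, IsSentence φ ∧ L = LangOfInf φ

/-- `w ≡_k w'` for ω-words. -/
def EquivKInf {A : Type} (k : ℕ) (w w' : ℕ → A) : Prop :=
  ∀ φ : Form A, IsSentence φ → φ.rank ≤ k → (ModelsInf w φ ↔ ModelsInf w' φ)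

/-- An FO-partition of `A^∞`. -/
def FOPartInf {A : Type} (P : Set (Set (ℕ → A))) : Prop :=
  FinPart P ∧ ∀ B ∈ P, FODefinableInf B

/-- The imprint of a finite partition of `A^∞` on a map `α : A^∞ → Sinf`. -/
def imprintInf {A Sinf : Type} (α : (ℕ → A) → Sinf) (P : Set (Set (ℕ → A))) :
    Set (Set Sinf) :=
  { T | ∃ K ∈ P, T ⊆ α '' K }

/-- A C-partition of `A^∞`. -/
def CPartInf {A : Type} (C : Set (Set (ℕ → A))) (P : Set (Set (ℕ → A))) : Prop :=
  FinPart P ∧ ∀ B ∈ P, B ∈ C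

/-- The optimal imprint on `α : A^∞ → Sinf` with respect to a class `C` of
ω-languages. -/
def optImprintInf {A Sinf : Type} (C : Set (Set (ℕ → A))) (α : (ℕ → A) → Sinf) :
    Set (Set Sinf) :=
  { T | ∀ P : Set (Set (ℕ → A)), CPartInf C P → T ∈ imprintInf α P }

/-- The optimal FO-imprint on `α : A^∞ → Sinf`. -/
def optImprintFOInf {A Sinf : Type} (α : (ℕ → A) → Sinf) : Set (Set Sinf) :=
  { T | ∀ P : Set (Set (ℕ → A)), FOPartInf P → T ∈ imprintInf α P }

/-- Concatenation of a finite word and an ω-word. -/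
def catInf {A : Type} (u : FreeSemigroup A) (x : ℕ → A) : ℕ → A :=
  fun n =>
    if h : n < (wordList u).length then (wordList u).get ⟨n, h⟩
    else x (n - (wordList u).length)

/-!
Any two C-partitions have a common C-refinement (intersect the blocks), so a minimal imprint among
the finitely many is the least one: optimal C-partitions exist, and the optimal imprint is the
imprint of any of them. If no pair `{t₁, t₂}` lies in the imprint of a partition, the blocks meeting
`α⁻¹(T₁)` cover `α⁻¹(T₁)` and avoid `α⁻¹(T₂)`; conversely a separating union of blocks forbids such
pairs in the imprint. A separator `K ∈ C` is such a union for the C-partition `{K, Kᶜ}`.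
-/

section Partitions

variable {X : Type}

theorem FinPart.eq_of_mem {P : Set (Set X)} (hP : FinPart P) {B B' : Set X} {x : X}
    (hB : B ∈ P) (hB' : B' ∈ P) (hxB : x ∈ B) (hxB' : x ∈ B') : B = B' :=
  (hP.2 x).unique ⟨hB, hxB⟩ ⟨hB', hxB'⟩

theorem finPart_pair_compl (K : Set X) : FinPart {K, Kᶜ} := by
  refine ⟨(Set.finite_singleton _).insert K, fun x => ?_⟩
  by_cases hx : x ∈ K
  · refine ⟨K, ⟨Set.mem_insert _ _, hx⟩, ?_⟩
    rintro B ⟨rfl | rfl, hxB⟩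
    exacts [rfl, absurd hx hxB]
  · refine ⟨Kᶜ, ⟨Set.mem_insert_of_mem _ rfl, hx⟩, ?_⟩
    rintro B ⟨rfl | rfl, hxB⟩
    exacts [absurd hxB hx, rfl]

theorem FinPart.inf {P P' : Set (Set X)} (hP : FinPart P) (hP' : FinPart P') :
    FinPart (Set.image2 (· ∩ ·) P P') := by
  refine ⟨hP.1.image2 _ hP'.1, fun x => ?_⟩
  obtain ⟨B, ⟨hB, hxB⟩, -⟩ := hP.2 x
  obtain ⟨B', ⟨hB', hxB'⟩, -⟩ := hP'.2 x
  refine ⟨B ∩ B', ⟨Set.mem_image2_of_mem hB hB', hxB, hxB'⟩, ?_⟩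
  rintro _ ⟨⟨D, hD, D', hD', rfl⟩, hxD, hxD'⟩
  rw [hP.eq_of_mem hD hB hxD hxB, hP'.eq_of_mem hD' hB' hxD' hxB']

end Partitions

section Imprints

variable {A S : Type} [Semigroup S] {C : Set (Set (FreeSemigroup A))}
  {α : FreeSemigroup A →ₙ* S}

theorem GoodClass.empty_mem (hC : GoodClass C) : ∅ ∈ C := by
  obtain ⟨K, hK⟩ := hC.1
  simpa using hC.2.2.1 K hK Kᶜ (hC.2.2.2.1 K hK)

theorem GoodClass.sUnion_mem (hC : GoodClass C) {Q : Set (Set (FreeSemigroup A))}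
    (hQ : Q.Finite) (hQC : Q ⊆ C) : ⋃₀ Q ∈ C := by
  induction Q, hQ using Set.Finite.induction_on with
  | empty => simpa using hC.empty_mem
  | insert _ _ ih =>
    rw [Set.sUnion_insert]
    exact hC.2.1 _ (hQC (Set.mem_insert _ _)) _
      (ih ((Set.subset_insert _ _).trans hQC))

theorem CPart.pair_compl (hC : GoodClass C) {K : Set (FreeSemigroup A)} (hK : K ∈ C) :
    CPart C {K, Kᶜ} :=
  ⟨finPart_pair_compl K, by rintro B (rfl | rfl); exacts [hK, hC.2.2.2.1 _ hK]⟩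

theorem CPart.inf (hC : GoodClass C) {P P' : Set (Set (FreeSemigroup A))} (hP : CPart C P)
    (hP' : CPart C P') : CPart C (Set.image2 (· ∩ ·) P P') :=
  ⟨hP.1.inf hP'.1, by rintro _ ⟨B, hB, B', hB', rfl⟩; exact hC.2.2.1 _ (hP.2 B hB) _ (hP'.2 B' hB')⟩

theorem imprint_mono_of_refines {P P' : Set (Set (FreeSemigroup A))}
    (h : ∀ B ∈ P, ∃ B' ∈ P', B ⊆ B') : imprint α P ⊆ imprint α P' := by
  rintro T ⟨B, hB, hTB⟩
  obtain ⟨B', hB', hBB'⟩ := h B hB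
  exact ⟨B', hB', hTB.trans (Set.image_mono hBB')⟩

theorem pair_mem_imprint_iff {P : Set (Set (FreeSemigroup A))} {t₁ t₂ : S} :
    ({t₁, t₂} : Set S) ∈ imprint α P ↔ ∃ B ∈ P, t₁ ∈ α '' B ∧ t₂ ∈ α '' B := by
  simp only [imprint, Set.mem_ofPred_eq, Set.insert_subset_iff, Set.singleton_subset_iff]

def IsOptimal (C : Set (Set (FreeSemigroup A))) (α : FreeSemigroup A →ₙ* S)
    (P : Set (Set (FreeSemigroup A))) : Prop :=
  CPart C P ∧ ∀ P', CPart C P' → imprint α P ⊆ imprint α P'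

theorem exists_isOptimal [Finite S] (hC : GoodClass C) (α : FreeSemigroup A →ₙ* S) :
    ∃ P, IsOptimal C α P := by
  obtain ⟨K, hK⟩ := hC.1
  obtain ⟨P, hP, hmin⟩ :=
    exists_minimalFor_of_wellFoundedLT (CPart C) (imprint α) ⟨_, CPart.pair_compl hC hK⟩
  refine ⟨P, hP, fun P' hP' => ?_⟩
  have hleft : imprint α (Set.image2 (· ∩ ·) P P') ⊆ imprint α P :=
    imprint_mono_of_refines (by rintro _ ⟨B, hB, B', -, rfl⟩; exact ⟨B, hB, Set.inter_subset_left⟩)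
  calc imprint α P ⊆ imprint α (Set.image2 (· ∩ ·) P P') := hmin (hP.inf hC hP') hleft
    _ ⊆ imprint α P' :=
      imprint_mono_of_refines (by
        rintro _ ⟨B, -, B', hB', rfl⟩; exact ⟨B', hB', Set.inter_subset_right⟩)

theorem IsOptimal.optImprint_eq {P : Set (Set (FreeSemigroup A))} (hP : IsOptimal C α P) :
    optImprint C α = imprint α P :=
  Set.Subset.antisymm (fun _ hT => hT P hP.1) (fun _ hT P' hP' => hP.2 P' hP' hT)

end Imprints

section Separation

variable {A S : Type} [Semigroup S] {α : FreeSemigroup A →ₙ* S}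
  {P : Set (Set (FreeSemigroup A))} {T₁ T₂ : Set S}

theorem pair_notMem_imprint_of_separates (hP : FinPart P) {Q : Set (Set (FreeSemigroup A))}
    (hQP : Q ⊆ P) (hQ : Separates (⋃₀ Q) (α ⁻¹' T₁) (α ⁻¹' T₂)) :
    ∀ t₁ ∈ T₁, ∀ t₂ ∈ T₂, ({t₁, t₂} : Set S) ∉ imprint α P := by
  rintro _ ht₁ _ ht₂ hpair
  obtain ⟨B, hB, ⟨w₁, hw₁, rfl⟩, ⟨w₂, hw₂, rfl⟩⟩ := pair_mem_imprint_iff.mp hpair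
  obtain ⟨B', hB'Q, hw₁B'⟩ := hQ.1 (show w₁ ∈ α ⁻¹' T₁ from ht₁)
  have hw₂Q : w₂ ∈ ⋃₀ Q := ⟨B', hB'Q, hP.eq_of_mem hB (hQP hB'Q) hw₁ hw₁B' ▸ hw₂⟩
  exact (hQ.2 ▸ ⟨hw₂Q, ht₂⟩ : w₂ ∈ (∅ : Set (FreeSemigroup A)))

theorem separates_sUnion_blocks_meeting (hP : FinPart P)
    (h : ∀ t₁ ∈ T₁, ∀ t₂ ∈ T₂, ({t₁, t₂} : Set S) ∉ imprint α P) :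
    Separates (⋃₀ {B ∈ P | (B ∩ α ⁻¹' T₁).Nonempty}) (α ⁻¹' T₁) (α ⁻¹' T₂) := by
  refine ⟨fun w hw => ?_, Set.eq_empty_iff_forall_notMem.mpr ?_⟩
  · obtain ⟨B, ⟨hB, hwB⟩, -⟩ := hP.2 w
    exact ⟨B, ⟨hB, w, hwB, hw⟩, hwB⟩
  · rintro w₂ ⟨⟨B, ⟨hB, w₁, hw₁B, hw₁⟩, hw₂B⟩, hw₂⟩
    exact h _ hw₁ _ hw₂ (pair_mem_imprint_iff.mpr ⟨B, hB, ⟨w₁, hw₁B, rfl⟩, ⟨w₂, hw₂B, rfl⟩⟩)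

end Separation

theorem stmt5_general {A S : Type} [Semigroup S] [Fintype S]
    (C : Set (Set (FreeSemigroup A))) (hC : GoodClass C)
    (α : FreeSemigroup A →ₙ* S) (T₁ T₂ : Set S) :
    ((∃ K ∈ C, Separates K (⇑α ⁻¹' T₁) (⇑α ⁻¹' T₂)) ↔
        ∀ t₁ ∈ T₁, ∀ t₂ ∈ T₂, ({t₁, t₂} : Set S) ∉ optImprint C α) ∧
    ((∀ t₁ ∈ T₁, ∀ t₂ ∈ T₂, ({t₁, t₂} : Set S) ∉ optImprint C α) ↔
        ∀ P : Set (Set (FreeSemigroup A)), CPart C P →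
          (∀ P' : Set (Set (FreeSemigroup A)), CPart C P' →
            imprint α P ⊆ imprint α P') →
          ∃ Q ⊆ P, Separates (⋃₀ Q) (⇑α ⁻¹' T₁) (⇑α ⁻¹' T₂)) := by
  obtain ⟨P₀, hP₀⟩ := exists_isOptimal hC α
  refine ⟨⟨?_, fun h => ?_⟩, ⟨fun h P hP hopt => ?_, fun h => ?_⟩⟩
  · rintro ⟨K, hK, hsep⟩ t₁ ht₁ t₂ ht₂ hpair
    exact pair_notMem_imprint_of_separates (CPart.pair_compl hC hK).1 (Q := {K})
      (by simp) (by simpa using hsep) t₁ ht₁ t₂ ht₂ (hpair _ (CPart.pair_compl hC hK))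
  · rw [hP₀.optImprint_eq] at h
    exact ⟨_, hC.sUnion_mem (hP₀.1.1.1.subset (Set.sep_subset _ _)) (fun B hB => hP₀.1.2 B hB.1),
      separates_sUnion_blocks_meeting hP₀.1.1 h⟩
  · rw [IsOptimal.optImprint_eq ⟨hP, hopt⟩] at h
    exact ⟨_, Set.sep_subset _ _, separates_sUnion_blocks_meeting hP.1 h⟩
  · obtain ⟨Q, hQP, hQ⟩ := h P₀ hP₀.1 hP₀.2
    rw [hP₀.optImprint_eq]
    exact pair_notMem_imprint_of_separates hP₀.1.1 hQP hQ

theorem stmt5 {A S : Type} [Fintype A] [Semigroup S] [Fintype S]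
    (C : Set (Set (FreeSemigroup A))) (hC : GoodClass C)
    (α : FreeSemigroup A →ₙ* S) (T₁ T₂ : Set S) :
    ((∃ K ∈ C, Separates K (⇑α ⁻¹' T₁) (⇑α ⁻¹' T₂)) ↔
        ∀ t₁ ∈ T₁, ∀ t₂ ∈ T₂, ({t₁, t₂} : Set S) ∉ optImprint C α) ∧
    ((∀ t₁ ∈ T₁, ∀ t₂ ∈ T₂, ({t₁, t₂} : Set S) ∉ optImprint C α) ↔
        ∀ P : Set (Set (FreeSemigroup A)), CPart C P →
          (∀ P' : Set (Set (FreeSemigroup A)), CPart C P' →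
            imprint α P ⊆ imprint α P') →
          ∃ Q ⊆ P, Separates (⋃₀ Q) (⇑α ⁻¹' T₁) (⇑α ⁻¹' T₂)) :=
  stmt5_general C hC α T₁ T₂

end FOSep
end

section
/- Let A be a finite alphabet. For every word u ∈ A⁺ and every integer k > 0, we have u^{2^k} ≡_k u^{2^k+1}. -/
open Pointwise

namespace FOSep

/-!
A formula with free variables is evaluated on a *marked word*, in which a variable marks the
position it denotes; quantifying over `n` moves the mark `n`, which is a pebble move of the
Ehrenfeucht–Fraïssé game. With atomic facts read existentially, the `k`-round game is compatible
with concatenation: a move in one factor is answered in the corresponding factor, and the other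
factor only loses the moved mark.

A move in `U^M` lands in a copy `U^q · U · U^(M-1-q)`. If `M` and `N` agree up to the threshold
`2^(k+1) - 1 = 2 (2^k - 1) + 1`, some `q'` makes `q, q'` and `M-1-q, N-1-q'` agree up to
`2^k - 1`, so answering at the same offset in copy `q'` wins by induction and composition.
Finally, winning the `k`-round game transfers every formula of quantifier rank at most `k`.
-/

abbrev MWord (A : Type) := List (A × Set ℕ)

namespace MWord

variable {A : Type}

def ofList (l : List A) : MWord A := l.map (·, ∅)

def erase (n : ℕ) (w : MWord A) : MWord A := w.map fun x => (x.1, x.2 \ {n})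

def mark (n p : ℕ) (w : MWord A) : MWord A :=
  w.mapIdx fun j x => (x.1, if j = p then insert n x.2 else x.2 \ {n})

def Unmarked (w : MWord A) : Prop := ∀ x ∈ w, x.2 = ∅

def Marked (w : MWord A) (i : ℕ) : Prop := ∃ x ∈ w, i ∈ x.2

def MarksLetter (w : MWord A) (i : ℕ) (a : A) : Prop := ∃ x ∈ w, x.1 = a ∧ i ∈ x.2

def Precedes (w : MWord A) (i j : ℕ) : Prop :=
  ∃ w₁ w₂, w = w₁ ++ w₂ ∧ Marked w₁ i ∧ Marked w₂ j

@[simp] lemma length_erase (n : ℕ) (w : MWord A) : (erase n w).length = w.length :=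
  List.length_map _

@[simp] lemma length_mark (n p : ℕ) (w : MWord A) : (mark n p w).length = w.length :=
  List.length_mapIdx

lemma getElem_erase {n j : ℕ} {w : MWord A} (hj : j < (erase n w).length) :
    (erase n w)[j] = ((w[j]'(by simpa using hj)).1, (w[j]'(by simpa using hj)).2 \ {n}) := by
  simp [erase]

lemma getElem_mark {n p j : ℕ} {w : MWord A} (hj : j < (mark n p w).length) :
    (mark n p w)[j] = have hj : j < w.length := by simpa using hj
      (w[j].1, if j = p then insert n w[j].2 else w[j].2 \ {n}) := by
  simp [mark]

lemma mem_getElem_mark {n p i j : ℕ} {w : MWord A} (hj : j < (mark n p w).length) :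
    i ∈ (mark n p w)[j].2 ↔ if i = n then j = p else i ∈ (w[j]'(by simpa using hj)).2 := by
  rw [getElem_mark]
  split_ifs <;> simp_all

lemma map_fst_mark (n p : ℕ) (w : MWord A) : (mark n p w).map Prod.fst = w.map Prod.fst :=
  List.ext_getElem (by simp) fun j _ _ => by simp [getElem_mark]

lemma mark_append_of_lt {n p : ℕ} {w₁ : MWord A} (w₂ : MWord A) (hp : p < w₁.length) :
    mark n p (w₁ ++ w₂) = mark n p w₁ ++ erase n w₂ := by
  refine List.ext_getElem (by simp) fun j h₁ h₂ => ?_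
  simp only [getElem_mark, List.getElem_append, length_mark]
  split_ifs <;> simp_all [getElem_erase]; omega

lemma mark_append_of_le {n p : ℕ} (w₁ : MWord A) {w₂ : MWord A} (hp : w₁.length ≤ p) :
    mark n p (w₁ ++ w₂) = erase n w₁ ++ mark n (p - w₁.length) w₂ := by
  refine List.ext_getElem (by simp) fun j h₁ h₂ => ?_
  simp only [getElem_mark, List.getElem_append, length_erase]
  split_ifs <;> (try omega) <;> simp_all [getElem_erase]

lemma mark_erase_self (n p : ℕ) (w : MWord A) : mark n p (erase n w) = mark n p w :=
  List.ext_getElem (by simp) fun j _ _ => by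
    simp only [getElem_mark, getElem_erase]
    split_ifs <;> simp

lemma mark_erase_comm {m n : ℕ} (hmn : m ≠ n) (p : ℕ) (w : MWord A) :
    mark n p (erase m w) = erase m (mark n p w) :=
  List.ext_getElem (by simp) fun j _ _ => by
    simp only [getElem_mark, getElem_erase]
    split_ifs
    · simp [Set.insert_sdiff_singleton_comm hmn.symm]
    · simp [Set.sdiff_sdiff_comm]

lemma Unmarked.erase_eq {w : MWord A} (hw : Unmarked w) (n : ℕ) : erase n w = w := by
  conv_rhs => rw [← List.map_id w]
  exact List.map_congr_left fun x hx => Prod.ext rfl (by simp [hw x hx])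

end MWord

namespace MWord

variable {A : Type} {w w' w₁ w₂ w₁' w₂' : MWord A} {i j n : ℕ} {a : A}

lemma marked_iff_exists_marksLetter : Marked w i ↔ ∃ a, MarksLetter w i a := by
  simp only [Marked, MarksLetter]
  exact ⟨fun ⟨x, hx, hi⟩ => ⟨x.1, x, hx, rfl, hi⟩, fun ⟨_, x, hx, _, hi⟩ => ⟨x, hx, hi⟩⟩

lemma marked_append : Marked (w₁ ++ w₂) i ↔ Marked w₁ i ∨ Marked w₂ i := by
  simp only [Marked, List.mem_append, or_and_right, exists_or]

lemma marksLetter_append :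
    MarksLetter (w₁ ++ w₂) i a ↔ MarksLetter w₁ i a ∨ MarksLetter w₂ i a := by
  simp only [MarksLetter, List.mem_append, or_and_right, exists_or]

lemma precedes_append : Precedes (w₁ ++ w₂) i j ↔
    Precedes w₁ i j ∨ (Marked w₁ i ∧ Marked w₂ j) ∨ Precedes w₂ i j := by
  constructor
  · rintro ⟨v₁, v₂, h, hi, hj⟩
    rcases List.append_eq_append_iff.1 h with ⟨c, rfl, rfl⟩ | ⟨c, rfl, rfl⟩
    · rcases marked_append.1 hi with hi | hi
      · exact Or.inr (Or.inl ⟨hi, marked_append.2 (Or.inr hj)⟩)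
      · exact Or.inr (Or.inr ⟨c, v₂, rfl, hi, hj⟩)
    · rcases marked_append.1 hj with hj | hj
      · exact Or.inl ⟨v₁, c, rfl, hi, hj⟩
      · exact Or.inr (Or.inl ⟨marked_append.2 (Or.inl hi), hj⟩)
  · rintro (⟨v₁, v₂, rfl, hi, hj⟩ | ⟨hi, hj⟩ | ⟨v₁, v₂, rfl, hi, hj⟩)
    · exact ⟨v₁, v₂ ++ w₂, by simp, hi, marked_append.2 (Or.inl hj)⟩
    · exact ⟨w₁, w₂, rfl, hi, hj⟩
    · exact ⟨w₁ ++ v₁, v₂, by simp, marked_append.2 (Or.inr hi), hj⟩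

lemma marked_erase : Marked (erase n w) i ↔ i ≠ n ∧ Marked w i := by
  constructor
  · rintro ⟨_, hy, hi⟩
    obtain ⟨x, hx, rfl⟩ := List.mem_map.1 hy
    exact ⟨hi.2, x, hx, hi.1⟩
  · rintro ⟨hn, x, hx, hi⟩
    exact ⟨_, List.mem_map_of_mem hx, hi, hn⟩

lemma marksLetter_erase : MarksLetter (erase n w) i a ↔ i ≠ n ∧ MarksLetter w i a := by
  constructor
  · rintro ⟨_, hy, ha, hi⟩
    obtain ⟨x, hx, rfl⟩ := List.mem_map.1 hy
    exact ⟨hi.2, x, hx, ha, hi.1⟩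
  · rintro ⟨hn, x, hx, ha, hi⟩
    exact ⟨_, List.mem_map_of_mem hx, ha, hi, hn⟩

lemma precedes_erase : Precedes (erase n w) i j ↔ i ≠ n ∧ j ≠ n ∧ Precedes w i j := by
  simp only [Precedes, erase, List.map_eq_append_iff]
  constructor
  · rintro ⟨_, _, ⟨v₁, v₂, rfl, rfl, rfl⟩, hi, hj⟩
    rw [← erase, marked_erase] at hi hj
    exact ⟨hi.1, hj.1, v₁, v₂, rfl, hi.2, hj.2⟩
  · rintro ⟨hi, hj, v₁, v₂, rfl, hv₁, hv₂⟩
    exact ⟨erase n v₁, erase n v₂, ⟨v₁, v₂, rfl, rfl, rfl⟩,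
      marked_erase.2 ⟨hi, hv₁⟩, marked_erase.2 ⟨hj, hv₂⟩⟩

lemma Unmarked.not_marked (hw : Unmarked w) : ¬ Marked w i := by
  rintro ⟨x, hx, hi⟩
  simp [hw x hx] at hi

end MWord

namespace MWord

variable {A : Type} {w w' w₁ w₂ w₁' w₂' : MWord A}

def AtomEquiv (w w' : MWord A) : Prop :=
  (∀ i a, MarksLetter w i a ↔ MarksLetter w' i a) ∧ ∀ i j, Precedes w i j ↔ Precedes w' i j

namespace AtomEquiv

lemma refl (w : MWord A) : AtomEquiv w w := ⟨fun _ _ => Iff.rfl, fun _ _ => Iff.rfl⟩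

lemma symm (h : AtomEquiv w w') : AtomEquiv w' w :=
  ⟨fun i a => (h.1 i a).symm, fun i j => (h.2 i j).symm⟩

lemma marked_iff (h : AtomEquiv w w') (i : ℕ) : Marked w i ↔ Marked w' i := by
  simp only [marked_iff_exists_marksLetter, h.1 i]

lemma append (h₁ : AtomEquiv w₁ w₁') (h₂ : AtomEquiv w₂ w₂') :
    AtomEquiv (w₁ ++ w₂) (w₁' ++ w₂') :=
  ⟨fun i a => by simp only [marksLetter_append, h₁.1 i a, h₂.1 i a],
    fun i j => by simp only [precedes_append, h₁.2 i j, h₂.2 i j, h₁.marked_iff, h₂.marked_iff]⟩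

lemma erase (h : AtomEquiv w w') (n : ℕ) : AtomEquiv (erase n w) (erase n w') :=
  ⟨fun i a => by simp only [marksLetter_erase, h.1 i a],
    fun i j => by simp only [precedes_erase, h.2 i j]⟩

end AtomEquiv

lemma atomEquiv_of_unmarked (hw : Unmarked w) (hw' : Unmarked w') : AtomEquiv w w' := by
  have no_letter : ∀ {u : MWord A}, Unmarked u → ∀ i a, ¬ MarksLetter u i a :=
    fun hu i a ha => hu.not_marked (marked_iff_exists_marksLetter.2 ⟨a, ha⟩)
  have no_order : ∀ {u : MWord A}, Unmarked u → ∀ i j, ¬ Precedes u i j :=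
    fun hu i _ ⟨_, _, h, hi, _⟩ => hu.not_marked (h ▸ marked_append.2 (Or.inl hi) : Marked _ i)
  exact ⟨fun i a => iff_of_false (no_letter hw i a) (no_letter hw' i a),
    fun i j => iff_of_false (no_order hw i j) (no_order hw' i j)⟩

def Forth (R : MWord A → MWord A → Prop) (w w' : MWord A) : Prop :=
  ∀ n, ∀ p < w.length, ∃ p' < w'.length, R (mark n p w) (mark n p' w')

lemma Forth.mono {R S : MWord A → MWord A → Prop} (hRS : ∀ {u u'}, R u u' → S u u')
    (h : Forth R w w') : Forth S w w' := fun n p hp =>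
  let ⟨p', hp', hR⟩ := h n p hp
  ⟨p', hp', hRS hR⟩

def EFEquiv : ℕ → MWord A → MWord A → Prop
  | 0, w, w' => AtomEquiv w w'
  | k + 1, w, w' => AtomEquiv w w' ∧ Forth (EFEquiv k) w w' ∧ Forth (EFEquiv k) w' w

namespace EFEquiv

variable {k : ℕ}

lemma atomEquiv (h : EFEquiv k w w') : AtomEquiv w w' := by
  cases k
  exacts [h, h.1]

lemma symm (h : EFEquiv k w w') : EFEquiv k w' w := by
  cases k
  exacts [AtomEquiv.symm h, ⟨h.1.symm, h.2.2, h.2.1⟩]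

lemma refl (k : ℕ) (w : MWord A) : EFEquiv k w w := by
  induction k generalizing w with
  | zero => exact AtomEquiv.refl w
  | succ k ih => exact ⟨AtomEquiv.refl w, fun n p hp => ⟨p, hp, ih _⟩, fun n p hp => ⟨p, hp, ih _⟩⟩

lemma of_succ (h : EFEquiv (k + 1) w w') : EFEquiv k w w' := by
  induction k generalizing w w' with
  | zero => exact h.1
  | succ k ih => exact ⟨h.1, h.2.1.mono ih, h.2.2.mono ih⟩

lemma erase (h : EFEquiv k w w') (n : ℕ) : EFEquiv k (MWord.erase n w) (MWord.erase n w') := by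
  induction k generalizing w w' with
  | zero => exact AtomEquiv.erase h n
  | succ k ih =>
    have forth : ∀ {u u' : MWord A}, Forth (EFEquiv k) u u' →
        Forth (EFEquiv k) (MWord.erase n u) (MWord.erase n u') := by
      intro u u' hf m p hp
      obtain ⟨p', hp', hm⟩ := hf m p (by simpa using hp)
      refine ⟨p', by simpa using hp', ?_⟩
      rcases eq_or_ne n m with rfl | hnm
      · simpa only [mark_erase_self] using hm
      · simpa only [mark_erase_comm hnm] using ih hm
    exact ⟨h.1.erase n, forth h.2.1, forth h.2.2⟩

lemma append (h₁ : EFEquiv k w₁ w₁') (h₂ : EFEquiv k w₂ w₂') :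
    EFEquiv k (w₁ ++ w₂) (w₁' ++ w₂') := by
  induction k generalizing w₁ w₂ w₁' w₂' with
  | zero => exact AtomEquiv.append h₁ h₂
  | succ k ih =>
    have forth : ∀ {u₁ u₂ u₁' u₂' : MWord A}, EFEquiv (k + 1) u₁ u₁' →
        EFEquiv (k + 1) u₂ u₂' → Forth (EFEquiv k) (u₁ ++ u₂) (u₁' ++ u₂') := by
      intro u₁ u₂ u₁' u₂' h₁ h₂ n p hp
      rw [List.length_append] at hp
      rcases lt_or_ge p u₁.length with hp₁ | hp₁
      · obtain ⟨p', hp', hm⟩ := h₁.2.1 n p hp₁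
        refine ⟨p', by simp; omega, ?_⟩
        rw [mark_append_of_lt _ hp₁, mark_append_of_lt _ hp']
        exact ih hm (h₂.of_succ.erase n)
      · obtain ⟨q', hq', hm⟩ := h₂.2.1 n (p - u₁.length) (by omega)
        refine ⟨u₁'.length + q', by simp; omega, ?_⟩
        rw [mark_append_of_le _ hp₁, mark_append_of_le _ (Nat.le_add_right _ _),
          Nat.add_sub_cancel_left]
        exact ih (h₁.of_succ.erase n) hm
    exact ⟨h₁.1.append h₂.1, forth h₁ h₂, forth h₁.symm h₂.symm⟩

end EFEquiv

end MWord

namespace MWord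

variable {A : Type} {w w' : MWord A} {i j n : ℕ} {a : A}

def Holds (w : MWord A) : Form A → Prop
  | .letter a i => MarksLetter w i a
  | .lt i j => Precedes w i j
  | .not φ => ¬ Holds w φ
  | .and φ ψ => Holds w φ ∧ Holds w ψ
  | .ex n φ => ∃ p < w.length, Holds (mark n p w) φ

theorem EFEquiv.holds_iff {k : ℕ} {φ : Form A} (h : EFEquiv k w w') (hφ : φ.rank ≤ k) :
    Holds w φ ↔ Holds w' φ := by
  induction φ generalizing k w w' with
  | letter a i => exact h.atomEquiv.1 i a
  | lt i j => exact h.atomEquiv.2 i j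
  | not φ ih => exact not_congr (ih h hφ)
  | and φ ψ ihφ ihψ =>
    exact and_congr (ihφ h (le_of_max_le_left hφ)) (ihψ h (le_of_max_le_right hφ))
  | ex n φ ih =>
    obtain ⟨k, rfl⟩ : ∃ k', k = k' + 1 := Nat.exists_eq_add_one.2 (by simp [Form.rank] at hφ; omega)
    have hφ' : φ.rank ≤ k := Nat.le_of_succ_le_succ hφ
    constructor
    · rintro ⟨p, hp, hφp⟩
      obtain ⟨p', hp', hm⟩ := h.2.1 n p hp
      exact ⟨p', hp', (ih hm hφ').1 hφp⟩
    · rintro ⟨p', hp', hφp⟩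
      obtain ⟨p, hp, hm⟩ := h.2.2 n p' hp'
      exact ⟨p, hp, (ih hm hφ').1 hφp⟩

lemma marksLetter_iff_getElem :
    MarksLetter w i a ↔ ∃ (p : ℕ) (hp : p < w.length), w[p].1 = a ∧ i ∈ w[p].2 := by
  simp only [MarksLetter, List.mem_iff_getElem]
  exact ⟨fun ⟨_, ⟨p, hp, hx⟩, h⟩ => ⟨p, hp, hx ▸ h⟩, fun ⟨p, hp, h⟩ => ⟨_, ⟨p, hp, rfl⟩, h⟩⟩

lemma precedes_iff_getElem : Precedes w i j ↔
    ∃ (p q : ℕ) (_ : p < q) (hq : q < w.length), i ∈ (w[p]'(by omega)).2 ∧ j ∈ w[q].2 := by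
  constructor
  · rintro ⟨w₁, w₂, rfl, ⟨x, hx, hi⟩, ⟨y, hy, hj⟩⟩
    obtain ⟨s, hs, rfl⟩ := List.getElem_of_mem hx
    obtain ⟨t, ht, rfl⟩ := List.getElem_of_mem hy
    refine ⟨s, w₁.length + t, by omega, by simp; omega, ?_, ?_⟩
    · rwa [List.getElem_append_left hs]
    · rw [List.getElem_append_right (by omega)]
      simpa using hj
  · rintro ⟨p, q, hpq, hq, hi, hj⟩
    refine ⟨w.take (p + 1), w.drop (p + 1), (List.take_append_drop _ _).symm, ?_, ?_⟩
    · exact ⟨_, List.mem_iff_getElem.2 ⟨p, by simp; omega, List.getElem_take⟩, hi⟩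
    · refine ⟨_, List.mem_iff_getElem.2 ⟨q - (p + 1), by simp; omega, ?_⟩, hj⟩
      simp only [List.getElem_drop]
      congr 1
      omega

def Represents (w : MWord A) (l : List A) (v : ℕ → Fin l.length) (S : Finset ℕ) : Prop :=
  w.map Prod.fst = l ∧ ∀ i ∈ S, ∀ (j : ℕ) (hj : j < w.length), i ∈ w[j].2 ↔ j = v i

namespace Represents

variable {l : List A} {v : ℕ → Fin l.length} {S T : Finset ℕ}

lemma length_eq (h : Represents w l v S) : w.length = l.length := by
  rw [← h.1, List.length_map]

lemma mono (h : Represents w l v S) (hTS : T ⊆ S) : Represents w l v T :=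
  ⟨h.1, fun i hi => h.2 i (hTS hi)⟩

lemma mark (h : Represents w l v (S \ {n})) (p : Fin l.length) :
    Represents (mark n p w) l (Function.update v n p) S := by
  refine ⟨(map_fst_mark n p w).trans h.1, fun i hi j hj => ?_⟩
  rw [mem_getElem_mark]
  rcases eq_or_ne i n with rfl | hin
  · simp
  · rw [if_neg hin, Function.update_of_ne hin]
    exact h.2 i (by simp [hi, hin]) j _

lemma marksLetter_iff (h : Represents w l v S) (hi : i ∈ S) :
    MarksLetter w i a ↔ l.get (v i) = a := by
  rw [marksLetter_iff_getElem]
  constructor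
  · rintro ⟨p, hp, ha, hip⟩
    obtain rfl := (h.2 i hi p hp).1 hip
    simpa [← h.1] using ha
  · intro ha
    refine ⟨v i, (v i).2.trans_eq h.length_eq.symm, ?_, (h.2 i hi _ _).2 rfl⟩
    simpa [← h.1] using ha

lemma precedes_iff (h : Represents w l v S) (hi : i ∈ S) (hj : j ∈ S) :
    Precedes w i j ↔ (v i : ℕ) < v j := by
  rw [precedes_iff_getElem]
  constructor
  · rintro ⟨p, q, hpq, hq, hip, hjq⟩
    rwa [← (h.2 i hi p _).1 hip, ← (h.2 j hj q hq).1 hjq]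
  · intro hlt
    exact ⟨v i, v j, hlt, (v j).2.trans_eq h.length_eq.symm, (h.2 i hi _ _).2 rfl, (h.2 j hj _ _).2 rfl⟩

theorem holds_iff_interp {φ : Form A} (h : Represents w l v φ.freeVars) :
    Holds w φ ↔ Interp l φ v := by
  induction φ generalizing w v with
  | letter a i => exact h.marksLetter_iff (by simp [Form.freeVars])
  | lt i j => exact h.precedes_iff (by simp [Form.freeVars]) (by simp [Form.freeVars])
  | not φ ih => exact not_congr (ih h)
  | and φ ψ ihφ ihψ =>
    exact and_congr (ihφ (h.mono Finset.subset_union_left))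
      (ihψ (h.mono Finset.subset_union_right))
  | ex n φ ih =>
    constructor
    · rintro ⟨p, hp, hφ⟩
      exact ⟨⟨p, hp.trans_eq h.length_eq⟩, (ih (h.mark _)).1 hφ⟩
    · rintro ⟨p, hφ⟩
      exact ⟨p, p.2.trans_eq h.length_eq.symm, (ih (h.mark p)).2 hφ⟩

end Represents

end MWord

lemma exists_min_eq_min_of_lt {t M N q : ℕ} (h : min M (2 * t + 1) = min N (2 * t + 1))
    (hq : q < M) : ∃ q' < N, min q t = min q' t ∧ min (M - 1 - q) t = min (N - 1 - q') t := by
  by_cases hMN : M = N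
  · exact ⟨q, hMN ▸ hq, rfl, by rw [hMN]⟩
  by_cases hqt : q < t
  · exact ⟨q, by omega, rfl, by omega⟩
  by_cases hqt' : M - 1 - q < t
  · exact ⟨N - 1 - (M - 1 - q), by omega, by omega, by omega⟩
  exact ⟨t, by omega, by omega, by omega⟩

lemma length_flatten_replicate {α : Type*} (M : ℕ) (U : List α) :
    (List.replicate M U).flatten.length = M * U.length := by
  simp [List.length_flatten, List.map_replicate, List.sum_replicate]

lemma flatten_replicate_eq_of_lt {α : Type*} {q M : ℕ} (hq : q < M) (U : List α) :
    (List.replicate M U).flatten =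
      (List.replicate q U).flatten ++ (U ++ (List.replicate (M - 1 - q) U).flatten) := by
  conv_lhs => rw [show M = q + (1 + (M - 1 - q)) by omega]
  simp only [List.replicate_add, List.flatten_append, List.replicate_one, List.flatten_singleton]

namespace MWord

variable {A : Type} {U : MWord A}

lemma unmarked_ofList (l : List A) : Unmarked (ofList l) := by
  simp [Unmarked, ofList]

lemma Unmarked.flatten_replicate (hU : Unmarked U) (M : ℕ) :
    Unmarked (List.replicate M U).flatten := by
  intro x hx
  simp only [List.mem_flatten, List.mem_replicate] at hx
  obtain ⟨_, ⟨_, rfl⟩, hx⟩ := hx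
  exact hU x hx

lemma Unmarked.mark_flatten_replicate (hU : Unmarked U) (n : ℕ) {q r M : ℕ} (hq : q < M)
    (hr : r < U.length) :
    mark n (q * U.length + r) (List.replicate M U).flatten =
      (List.replicate q U).flatten ++ (mark n r U ++ (List.replicate (M - 1 - q) U).flatten) := by
  rw [flatten_replicate_eq_of_lt hq, mark_append_of_le _ (by simp),
    mark_append_of_lt _ (by simp [hr]),
    (hU.flatten_replicate _).erase_eq, (hU.flatten_replicate _).erase_eq,
    length_flatten_replicate, Nat.add_sub_cancel_left]

theorem efEquiv_flatten_replicate (hU : Unmarked U) (k : ℕ) {M N : ℕ}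
    (h : min M (2 ^ k - 1) = min N (2 ^ k - 1)) :
    EFEquiv k (List.replicate M U).flatten (List.replicate N U).flatten := by
  induction k generalizing M N with
  | zero => exact atomEquiv_of_unmarked (hU.flatten_replicate M) (hU.flatten_replicate N)
  | succ k ih =>
    have forth : ∀ {M N : ℕ}, min M (2 ^ (k + 1) - 1) = min N (2 ^ (k + 1) - 1) →
        Forth (EFEquiv k) (List.replicate M U).flatten (List.replicate N U).flatten := by
      intro M N h n p hp
      rw [length_flatten_replicate] at hp
      have hU₀ : 0 < U.length := Nat.pos_of_ne_zero fun h₀ => by simp [h₀] at hp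
      obtain ⟨q, r, hr, rfl⟩ : ∃ q r, r < U.length ∧ p = q * U.length + r :=
        ⟨p / U.length, p % U.length, Nat.mod_lt _ hU₀, (Nat.div_add_mod' p _).symm⟩
      have hq : q < M := Nat.lt_of_mul_lt_mul_right ((Nat.le_add_right _ r).trans_lt hp)
      have hpow : 2 * (2 ^ k - 1) + 1 = 2 ^ (k + 1) - 1 := by
        have := Nat.one_le_two_pow (n := k)
        rw [pow_succ]
        omega
      have h' : min M (2 * (2 ^ k - 1) + 1) = min N (2 * (2 ^ k - 1) + 1) := by rwa [hpow]
      obtain ⟨q', hq', hl, hr'⟩ := exists_min_eq_min_of_lt h' hq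
      refine ⟨q' * U.length + r, ?_, ?_⟩
      · rw [length_flatten_replicate]
        nlinarith
      · rw [hU.mark_flatten_replicate n hq hr, hU.mark_flatten_replicate n hq' hr]
        exact (ih hl).append ((EFEquiv.refl k _).append (ih hr'))
    exact ⟨atomEquiv_of_unmarked (hU.flatten_replicate M) (hU.flatten_replicate N),
      forth h, forth h.symm⟩

lemma ofList_flatten_replicate (M : ℕ) (l : List A) :
    ofList (List.replicate M l).flatten = (List.replicate M (ofList l)).flatten := by
  simp [ofList, List.map_flatten, List.map_replicate]

end MWord

open MWord

lemma wordList_mul {A : Type} (u v : FreeSemigroup A) :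
    wordList (u * v) = wordList u ++ wordList v := by
  simp [wordList, FreeSemigroup.head_mul, FreeSemigroup.tail_mul]

lemma wordList_spow {A : Type} (u : FreeSemigroup A) (m : ℕ) :
    wordList (spow u m) = (List.replicate (m + 1) (wordList u)).flatten := by
  induction m with
  | zero => simp [spow]
  | succ m ih => rw [spow, wordList_mul, ih, List.replicate_succ' (n := m + 1),
      List.flatten_append, List.flatten_singleton]

lemma models_iff_holds {A : Type} (w : FreeSemigroup A) {φ : Form A} (hφ : IsSentence φ) :
    Models w φ ↔ Holds (ofList (wordList w)) φ := by
  have hrep : ∀ v, Represents (ofList (wordList w)) (wordList w) v φ.freeVars :=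
    fun v => ⟨by simp [ofList, Function.comp_def], by simp [show φ.freeVars = ∅ from hφ]⟩
  exact ⟨fun h => (hrep _).holds_iff_interp.2 (h fun _ => ⟨0, by simp [wordList]⟩),
    fun h v => (hrep v).holds_iff_interp.1 h⟩

theorem stmt10_general {A : Type} (u : FreeSemigroup A) (k : ℕ) :
    EquivK k (spow u (2 ^ k - 1)) (spow u (2 ^ k)) := by
  intro φ hφ hrank
  rw [models_iff_holds _ hφ, models_iff_holds _ hφ, wordList_spow, wordList_spow,
    ofList_flatten_replicate, ofList_flatten_replicate]
  exact (efEquiv_flatten_replicate (unmarked_ofList _) k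
    (by have := Nat.one_le_two_pow (n := k); omega)).holds_iff hrank

theorem stmt10 {A : Type} [Fintype A] (u : FreeSemigroup A) (k : ℕ)
    (hk : 0 < k) :
    EquivK k (spow u (2 ^ k - 1)) (spow u (2 ^ k)) :=
  stmt10_general u k

end FOSep
end
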